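/- arXiv:1312.4650 — 4 statements merged into one kernel-verified Lean document; each statement's English description precedes it below -/
import Mathlib

section
/- The group homomorphism from the free group on seven generators to GL(4,ℤ) sending the seven generators to the matrices S₁S₂, S₁S₃, S₁S₄, S₁S₅, S₁S₆, S₁S₇, S₁S₈ is injective; that is, the orientation-preserving Apollonian 3-group A = Ã ∩ SO_Q(ℤ) is a free group of rank 7 on these generators. -/
open Matrix

/-- The quadratic form `Q(x,y,z,w) = w² - 2w(x+y+z) + x² + y² + z²`. -/
def QF (v : Fin 4 → ℤ) : ℤ :=
  v 3 ^ 2 - 2 * v 3 * (v 0 + v 1 + v 2) + v 0 ^ 2 + v 1 ^ 2 + v 2 ^ 2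

/-- The eight reflection generators `S₁, …, S₈` of the Apollonian 3-group. -/
def S : Fin 8 → Matrix (Fin 4) (Fin 4) ℤ :=
  ![!![1,0,0,0; 0,1,0,0; 0,0,1,0; 2,2,2,-1],
    !![-3,4,4,4; 0,1,0,0; 0,0,1,0; -2,2,2,3],
    !![1,0,0,0; 4,-3,4,4; 0,0,1,0; 2,-2,2,3],
    !![1,0,0,0; 0,1,0,0; 4,4,-3,4; 2,2,-2,3],
    !![-3,-4,4,12; -4,-3,4,12; 0,0,1,0; -2,-2,2,7],
    !![-3,4,-4,12; 0,1,0,0; -4,4,-3,12; -2,2,-2,7],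
    !![1,0,0,0; 4,-3,-4,12; 4,-4,-3,12; 2,-2,-2,7],
    !![-3,-4,-4,20; -4,-3,-4,20; -4,-4,-3,20; -2,-2,-2,11]]

theorem S_invol : ∀ i : Fin 8, S i * S i = 1 := by decide

/-- The generators as elements of `GL(4, ℤ)`. -/
def SU (i : Fin 8) : GL (Fin 4) ℤ := ⟨S i, S i, S_invol i, S_invol i⟩

/-- The Apollonian 3-group `Ã = ⟨S₁,…,S₈⟩ ≤ GL(4, ℤ)`. -/
def apollonian3Group : Subgroup (GL (Fin 4) ℤ) := Subgroup.closure (Set.range SU)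

/-- The dual root quadruple `r' = (2w-κ₁, 2w-κ₂, 2w-κ₃, w)`. -/
def dualRoot (r : Fin 4 → ℤ) : Fin 4 → ℤ :=
  ![2 * r 3 - r 0, 2 * r 3 - r 1, 2 * r 3 - r 2, r 3]

/-- The set of curvatures of the Apollonian-3 packing with root quadruple `r`:
the first three entries of the quadruples in the orbits `Ã·r` and `Ã·r'`. -/
def curvatureSet (r : Fin 4 → ℤ) : Set ℤ :=
  {n | ∃ γ ∈ apollonian3Group, ∃ i : Fin 3,
      Matrix.mulVec (γ : Matrix (Fin 4) (Fin 4) ℤ) r i.castSucc = n} ∪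
  {n | ∃ γ ∈ apollonian3Group, ∃ i : Fin 3,
      Matrix.mulVec (γ : Matrix (Fin 4) (Fin 4) ℤ) (dualRoot r) i.castSucc = n}

/-- The packing is primitive: the gcd of the set of curvatures is 1. -/
def IsPrimitivePacking (r : Fin 4 → ℤ) : Prop :=
  ∀ d : ℤ, (∀ n ∈ curvatureSet r, d ∣ n) → IsUnit d

/-!
Each `S j` is a reflection `v ↦ v - (m j ⬝ᵥ v) • r j` with `m j ⬝ᵥ r j = 2` and
`m k ⬝ᵥ r j ≤ -2` for `k ≠ j`. Hence `S j` maps the region `P k` beyond the mirror of `S k`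
(and behind all other mirrors) into `P j` whenever `k ≠ j`: the eight reflections play
ping-pong, as in a Coxeter group with all exponents infinite. For the products
`S 0 * S (i + 1)` the sets `S 0 • P (i + 1)` and `P (i + 1)` then serve as ping-pong sets of
a free group.
-/

open scoped Pointwise Function

section PingPong

variable {G α : Type*} [Group G] [MulAction G α]

theorem pow_succ_smul_subset_of_smul_union_subset {a : G} {T U : Set α}
    (h : a • (T ∪ U) ⊆ U) (n : ℕ) : a ^ (n + 1) • T ⊆ U := by
  induction n with
  | zero => simpa using (Set.smul_set_mono Set.subset_union_left).trans h
  | succ n ih =>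
    rw [pow_succ', mul_smul]
    exact (Set.smul_set_mono (ih.trans Set.subset_union_right)).trans h

/-- A ping-pong lemma for free groups in which each generator `a i` only has to move the
other ping-pong sets `X j ∪ Y j` (and not the whole complement of `Y i`) into `X i`. -/
theorem FreeGroup.injective_lift_of_ping_pong_of_smul_subset {ι : Type*} [Nontrivial ι]
    (a : ι → G) (X Y : ι → Set α) (hne : ∀ i, (X i ∪ Y i).Nonempty)
    (hdisj : Pairwise (Disjoint on fun i => X i ∪ Y i))
    (hX : ∀ i j, j ≠ i → a i • (X j ∪ Y j ∪ X i) ⊆ X i)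
    (hY : ∀ i j, j ≠ i → (a i)⁻¹ • (X j ∪ Y j ∪ Y i) ⊆ Y i) :
    Function.Injective (FreeGroup.lift a) := by
  have hlift : FreeGroup.lift a = (Monoid.CoprodI.lift fun i => FreeGroup.lift fun _ => a i).comp
      freeGroupEquivCoprodI.toMonoidHom := by
    ext i
    simp
  rw [hlift, MonoidHom.coe_comp]
  refine Function.Injective.comp ?_ freeGroupEquivCoprodI.injective
  have hcard : 3 ≤ Cardinal.mk (FreeGroup Unit) := by
    rw [FreeGroup.freeGroupUnitEquivInt.cardinal_eq, Cardinal.mk_denumerable]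
    exact Cardinal.natCast_le_aleph0
  refine Monoid.CoprodI.lift_injective_of_ping_pong _
    (Or.inr ⟨Classical.arbitrary ι, hcard⟩) _ hne hdisj ?_
  intro i j hij h h1
  obtain ⟨n, rfl⟩ := FreeGroup.freeGroupUnitEquivInt.symm.surjective h
  change (FreeGroup.lift fun _ => a i) (FreeGroup.of () ^ n) • (X j ∪ Y j) ⊆ X i ∪ Y i
  have hn : n ≠ 0 := by rintro rfl; exact h1 rfl
  rw [map_zpow, FreeGroup.lift_apply_of]
  obtain ⟨k, rfl | rfl⟩ := Int.eq_nat_or_neg n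
  · obtain ⟨k, rfl⟩ := Nat.exists_eq_succ_of_ne_zero (by omega : k ≠ 0)
    rw [zpow_natCast]
    exact (pow_succ_smul_subset_of_smul_union_subset (hX i j hij.symm) k).trans
      Set.subset_union_left
  · obtain ⟨k, rfl⟩ := Nat.exists_eq_succ_of_ne_zero (by omega : k ≠ 0)
    rw [_root_.zpow_neg, zpow_natCast, ← inv_pow]
    exact (pow_succ_smul_subset_of_smul_union_subset (hY i j hij.symm) k).trans
      Set.subset_union_right

theorem FreeGroup.injective_lift_mul_of_involutive_ping_pong {n : ℕ} [Nontrivial (Fin n)]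
    (s : Fin (n + 1) → G) (hs : ∀ j, s j * s j = 1) (P : Fin (n + 1) → Set α)
    (hne : ∀ j, (P j).Nonempty) (hdisj : Pairwise (Disjoint on P))
    (hsP : ∀ j k, k ≠ j → s j • P k ⊆ P j) :
    Function.Injective (FreeGroup.lift fun i : Fin n => s 0 * s i.succ) := by
  have hs0 : ∀ i : Fin n, s 0 • P i.succ ⊆ P 0 := fun i => hsP 0 _ (Fin.succ_ne_zero i)
  have hsucc : ∀ i : Fin n, s i.succ • P 0 ⊆ P i.succ :=
    fun i => hsP _ 0 (Fin.succ_ne_zero i).symm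
  have hsucc_ne : ∀ i j : Fin n, j ≠ i → s i.succ • P j.succ ⊆ P i.succ :=
    fun i j hij => hsP _ _ ((Fin.succ_injective n).ne hij)
  refine FreeGroup.injective_lift_of_ping_pong_of_smul_subset _ (fun i => s 0 • P i.succ)
    (fun i => P i.succ) (fun i => (hne _).inr) ?_ ?_ ?_
  · intro i j hij
    refine Disjoint.union_left (Disjoint.union_right ?_ ?_) (Disjoint.union_right ?_ ?_)
    · exact Set.disjoint_smul_set.2 (hdisj ((Fin.succ_injective n).ne hij))
    · exact (hdisj (Fin.succ_ne_zero j).symm).mono_left (hs0 i)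
    · exact (hdisj (Fin.succ_ne_zero i)).mono_right (hs0 j)
    · exact hdisj ((Fin.succ_injective n).ne hij)
  · intro i j hij
    rw [mul_smul]
    refine Set.smul_set_mono ?_
    simp only [Set.smul_set_union]
    exact Set.union_subset (Set.union_subset ((Set.smul_set_mono (hs0 j)).trans (hsucc i))
      (hsucc_ne i j hij)) ((Set.smul_set_mono (hs0 i)).trans (hsucc i))
  · intro i j hij
    rw [_root_.mul_inv_rev, inv_eq_of_mul_eq_one_right (hs _), inv_eq_of_mul_eq_one_right (hs _),
      mul_smul, Set.smul_set_union (a := s 0), Set.smul_set_union (a := s 0), smul_smul, hs,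
      one_smul]
    simp only [Set.smul_set_union]
    exact Set.union_subset (Set.union_subset (hsucc_ne i j hij)
      ((Set.smul_set_mono (hs0 j)).trans (hsucc i))) ((Set.smul_set_mono (hs0 i)).trans (hsucc i))

end PingPong

section Reflection

variable {ι n R : Type*} [Fintype n] [CommRing R] [LinearOrder R] [IsStrictOrderedRing R]

def pingPongRegion (m : ι → n → R) (j : ι) : Set (n → R) :=
  {v | 0 < m j ⬝ᵥ v ∧ ∀ k, k ≠ j → m k ⬝ᵥ v + m j ⬝ᵥ v ≤ 0}

theorem pairwise_disjoint_pingPongRegion (m : ι → n → R) :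
    Pairwise (Disjoint on pingPongRegion m) := by
  intro j k hjk
  refine Set.disjoint_left.2 fun v hj hk => ?_
  linarith [hj.1, hk.1, hk.2 j hjk]

variable {m r : ι → n → R} (hdiag : ∀ j, m j ⬝ᵥ r j = 2)
  (hoff : ∀ j k, k ≠ j → m k ⬝ᵥ r j ≤ -2)
include hdiag hoff

theorem mem_pingPongRegion_self (j : ι) : r j ∈ pingPongRegion m j :=
  ⟨by rw [hdiag]; exact two_pos, fun k hk => by linarith [hdiag j, hoff j k hk]⟩

theorem sub_smul_mem_pingPongRegion {j k : ι} (hkj : k ≠ j) {v : n → R}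
    (hv : v ∈ pingPongRegion m k) : v - (m j ⬝ᵥ v) • r j ∈ pingPongRegion m j := by
  have hdot : ∀ l, m l ⬝ᵥ (v - (m j ⬝ᵥ v) • r j) = m l ⬝ᵥ v - m j ⬝ᵥ v * m l ⬝ᵥ r j := by
    intro l
    rw [dotProduct_sub, dotProduct_smul, smul_eq_mul]
  have hj : m j ⬝ᵥ v < 0 := by linarith [hv.1, hv.2 j hkj.symm]
  refine ⟨by rw [hdot, hdiag]; linarith, fun l hl => ?_⟩
  rw [hdot, hdot, hdiag]
  have hl_le : m l ⬝ᵥ v ≤ -(m j ⬝ᵥ v) := by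
    rcases eq_or_ne l k with rfl | hlk
    · linarith [hv.2 j hkj.symm]
    · linarith [hv.1, hv.2 l hlk]
  nlinarith [hoff j l hl]

end Reflection

namespace Apollonian3

def mirror : Fin 8 → Fin 4 → ℤ :=
  ![![1, 1, 1, -1], ![-1, 1, 1, 1], ![1, -1, 1, 1], ![1, 1, -1, 1],
    ![-1, -1, 1, 3], ![-1, 1, -1, 3], ![1, -1, -1, 3], ![-1, -1, -1, 5]]

def root : Fin 8 → Fin 4 → ℤ :=
  ![![0, 0, 0, -2], ![-4, 0, 0, -2], ![0, -4, 0, -2], ![0, 0, -4, -2],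
    ![-4, -4, 0, -2], ![-4, 0, -4, -2], ![0, -4, -4, -2], ![-4, -4, -4, -2]]

theorem S_eq_one_sub_vecMulVec : ∀ j, S j = 1 - vecMulVec (root j) (mirror j) := by
  decide

theorem mirror_dotProduct_root_self : ∀ j, mirror j ⬝ᵥ root j = 2 := by
  decide

theorem mirror_dotProduct_root_le : ∀ j k, k ≠ j → mirror k ⬝ᵥ root j ≤ -2 := by
  decide

theorem SU_smul (j : Fin 8) (v : Fin 4 → ℤ) : SU j • v = v - (mirror j ⬝ᵥ v) • root j := by
  rw [Units.smul_def, smul_eq_mulVec]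
  change S j *ᵥ v = _
  rw [S_eq_one_sub_vecMulVec, sub_mulVec, one_mulVec, vecMulVec_mulVec, op_smul_eq_smul]

theorem SU_smul_pingPongRegion_subset {j k : Fin 8} (hkj : k ≠ j) :
    SU j • pingPongRegion mirror k ⊆ pingPongRegion mirror j := by
  refine Set.smul_set_subset_iff.2 fun v hv => ?_
  rw [SU_smul]
  exact sub_smul_mem_pingPongRegion mirror_dotProduct_root_self mirror_dotProduct_root_le hkj hv

end Apollonian3

open Apollonian3 in
/-- The orientation-preserving Apollonian 3-group `A = Ã ∩ SO_Q(ℤ)` is free of rank 7: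
the homomorphism from the free group on seven generators to `GL(4, ℤ)` sending the
`i`-th generator to `S₁ · Sᵢ₊₁` is injective. -/
theorem apollonian3_rotation_group_free
    (φ : FreeGroup (Fin 7) →* GL (Fin 4) ℤ)
    (hφ : ∀ i : Fin 7,
      ((φ (FreeGroup.of i)) : Matrix (Fin 4) (Fin 4) ℤ) = S 0 * S i.succ) :
    Function.Injective φ := by
  have hφ_eq : φ = FreeGroup.lift fun i => SU 0 * SU i.succ :=
    FreeGroup.ext_hom _ _ fun i => Units.ext <| by simp [hφ, SU]
  rw [hφ_eq]
  exact FreeGroup.injective_lift_mul_of_involutive_ping_pong SU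
    (fun j => Units.ext (S_invol j)) (pingPongRegion mirror)
    (fun j => ⟨_, mem_pingPongRegion_self mirror_dotProduct_root_self
      mirror_dotProduct_root_le j⟩)
    (pairwise_disjoint_pingPongRegion mirror) fun _ _ => SU_smul_pingPongRegion_subset
end

section
/- The group homomorphism from the free group on three generators to SL(2,ℤ) sending the three generators to the parabolic matrices [[1,2],[-2,-3]], [[1,0],[4,1]], and [[-1,2],[-2,3]] is injective; that is, the subgroup Γ_{C₃} of SL(2,ℤ) generated by these three elements is freely generated by them. -/
open Matrix

/-- The parabolic element `[[1,2],[-2,-3]]` fixing `-1`. -/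
def P1 : Matrix.SpecialLinearGroup (Fin 2) ℤ :=
  ⟨!![1, 2; -2, -3], by norm_num [Matrix.det_fin_two_of]⟩

/-- The parabolic element `[[1,0],[4,1]]` fixing `0`. -/
def P2 : Matrix.SpecialLinearGroup (Fin 2) ℤ :=
  ⟨!![1, 0; 4, 1], by norm_num [Matrix.det_fin_two_of]⟩

/-- The parabolic element `[[-1,2],[-2,3]]` fixing `1`. -/
def P3 : Matrix.SpecialLinearGroup (Fin 2) ℤ :=
  ⟨!![-1, 2; -2, 3], by norm_num [Matrix.det_fin_two_of]⟩

/-!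
Ping-pong on the projective line over `ℤ`, seen as nonzero vectors of `ℤ²` with slope
`v 0 / v 1`. The points `∞, -1, -1/2, 0, 1/2, 1` cut it into six half-open arcs. Since `SL(2)`
preserves the determinant form `wedge`, it maps the arc `[a, b)` onto `[g a, g b)`; hence each
parabolic generator maps the complement of the arc `[∞, -1)`, `[-1/2, 0)`, `[1, ∞)` respectively
onto the arc `[-1, -1/2)`, `[0, 1/2)`, `[1/2, 1)` on the other side of its fixed point. These six
arcs are pairwise disjoint, which is all the ping-pong lemma needs.
-/

open Pointwise Function

theorem Matrix.SpecialLinearGroup.smul_eq_mulVec {R n : Type*} [CommRing R] [Fintype n]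
    [DecidableEq n] (g : SpecialLinearGroup n R) (v : n → R) : g • v = (g : Matrix n n R) *ᵥ v :=
  rfl

section Wedge

variable {R : Type*} [CommRing R]

def wedge (u v : Fin 2 → R) : R := u 0 * v 1 - u 1 * v 0

theorem wedge_smul (g : SpecialLinearGroup (Fin 2) R) (u v : Fin 2 → R) :
    wedge (g • u) (g • v) = wedge u v := by
  have hg := g.det_coe
  rw [det_fin_two] at hg
  simp only [wedge, SpecialLinearGroup.smul_eq_mulVec, mulVec_fin_two, cons_val_zero,
    cons_val_one]
  linear_combination (u 0 * v 1 - u 1 * v 0) * hg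

theorem wedge_smul_eq_sub (a b v : Fin 2 → R) :
    wedge a b • v = wedge v b • a - wedge v a • b := by
  ext i
  fin_cases i <;> simp [wedge] <;> ring

variable (R) in
def nonzeroVectors : SubMulAction (SpecialLinearGroup (Fin 2) R) (Fin 2 → R) where
  carrier := {v | v ≠ 0}
  smul_mem' g _ hv := (smul_ne_zero_iff_ne g).2 hv

theorem mem_nonzeroVectors {v : Fin 2 → R} : v ∈ nonzeroVectors R ↔ v ≠ 0 := Iff.rfl

end Wedge

section Arc

variable {R : Type*} [CommRing R] [LinearOrder R]

/-- The half-open arc `[a, b)` of the projective line, traversed in the direction of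
increasing slope `v 0 / v 1`; the factor `wedge b a` makes it independent of the signs of
the representatives `a` and `b`. -/
def arc (a b : Fin 2 → R) : Set (nonzeroVectors R) :=
  {v | wedge (v : Fin 2 → R) a = 0 ∨ 0 < wedge (v : Fin 2 → R) a * wedge b v * wedge b a}

theorem mem_arc_left {a : Fin 2 → R} (ha : a ≠ 0) (b : Fin 2 → R) :
    (⟨a, ha⟩ : nonzeroVectors R) ∈ arc a b :=
  Or.inl (by simp [wedge, mul_comm])

theorem smul_arc (g : SpecialLinearGroup (Fin 2) R) (a b : Fin 2 → R) :
    g • arc a b = arc (g • a) (g • b) := by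
  ext v
  rw [Set.mem_smul_set_iff_inv_smul_mem]
  simp only [arc, Set.mem_ofPred_eq, SubMulAction.val_smul]
  rw [← wedge_smul g (g⁻¹ • (v : Fin 2 → R)), ← wedge_smul g b (g⁻¹ • (v : Fin 2 → R)),
    smul_inv_smul, ← wedge_smul g b a]

variable [IsStrictOrderedRing R]

theorem arc_neg_left (a b : Fin 2 → R) : arc (-a) b = arc a b := by
  ext v
  simp only [arc, Set.mem_ofPred_eq, wedge, Pi.neg_apply]
  constructor <;> rintro (h | h) <;> [left; right; left; right] <;> linarith

theorem compl_arc {a b : Fin 2 → R} (hab : wedge a b ≠ 0) : (arc a b)ᶜ = arc b a := by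
  ext ⟨v, hv⟩
  have hv' : wedge v a ≠ 0 ∨ wedge v b ≠ 0 := by
    by_contra! h
    refine hv ((smul_eq_zero.mp ?_).resolve_left hab)
    rw [wedge_smul_eq_sub, h.1, h.2, zero_smul, zero_smul, sub_zero]
  have hba : wedge b a = -wedge a b := by simp only [wedge]; ring
  have hbv : wedge b v = -wedge v b := by simp only [wedge]; ring
  have hav : wedge a v = -wedge v a := by simp only [wedge]; ring
  simp only [arc, Set.mem_compl_iff, Set.mem_ofPred_eq, hba, hbv, hav]
  generalize wedge v a = p at *
  generalize wedge v b = q at *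
  rw [show p * -q * -wedge a b = p * q * wedge a b by ring,
    show q * -p * wedge a b = -(p * q * wedge a b) by ring, neg_pos]
  rcases eq_or_ne p 0 with rfl | hp
  · simpa using hv'
  rcases eq_or_ne q 0 with rfl | hq
  · simpa using hp
  have hpqw : p * q * wedge a b ≠ 0 := mul_ne_zero (mul_ne_zero hp hq) hab
  simp only [hp, hq, false_or, not_lt]
  exact ⟨fun h => h.lt_of_ne hpqw, le_of_lt⟩

end Arc

universe u

theorem FreeGroup.injective_lift_of_smul_compl_eq {ι G : Type u} {α : Type*} [Nontrivial ι]
    [Group G] [MulAction G α] (a : ι → G) (X Y : ι → Set α) (hXnonempty : ∀ i, (X i).Nonempty)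
    (hXdisj : Pairwise (Disjoint on X)) (hYdisj : Pairwise (Disjoint on Y))
    (hXYdisj : ∀ i j, Disjoint (X i) (Y j)) (hXY : ∀ i, a i • (Y i)ᶜ = X i) :
    Injective (FreeGroup.lift a) :=
  FreeGroup.injective_lift_of_ping_pong a X Y hXnonempty hXdisj hYdisj hXYdisj
    (fun i => (hXY i).le)
    (fun i => by rw [← hXY i, Set.smul_set_compl, Pi.inv_apply, inv_smul_smul, compl_compl])

/-- Representatives of the slopes `∞, -1, -1/2, 0, 1/2, 1`, in cyclic order. -/
def cusp : Fin 6 → Fin 2 → ℤ := ![![-1, 0], ![-1, 1], ![-1, 2], ![0, 1], ![-1, -2], ![1, 1]]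

theorem cusp_ne_zero (k : Fin 6) : cusp k ≠ 0 := by
  fin_cases k <;> decide

def sector (k : Fin 6) : Set (nonzeroVectors ℤ) := arc (cusp k) (cusp (k + 1))

theorem pairwise_disjoint_sector : Pairwise (Disjoint on sector) := by
  intro i j hij
  rw [Function.onFun, Set.disjoint_left]
  intro v h1 h2
  have hv : (v : Fin 2 → ℤ) 0 = 0 → (v : Fin 2 → ℤ) 1 ≠ 0 := by
    simpa [funext_iff, Fin.forall_fin_two] using mem_nonzeroVectors.mp v.2
  -- each membership is a sign condition on a product of two linear forms
  fin_cases i <;> fin_cases j <;> simp [sector, arc, cusp, wedge] at h1 h2 hij <;>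
    simp only [mul_pos_iff, mul_neg_iff] at h1 h2 <;> omega

theorem P1_smul_compl_sector : P1 • (sector 0)ᶜ = sector 1 := by
  have h1 : P1 • cusp 1 = -cusp 1 := by decide
  have h0 : P1 • cusp 0 = cusp 2 := by decide
  simp only [sector, Fin.reduceAdd]
  rw [compl_arc (by decide), smul_arc, h1, h0, arc_neg_left]

theorem P2_smul_compl_sector : P2 • (sector 2)ᶜ = sector 3 := by
  have h3 : P2 • cusp 3 = cusp 3 := by decide
  have h2 : P2 • cusp 2 = cusp 4 := by decide
  simp only [sector, Fin.reduceAdd]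
  rw [compl_arc (by decide), smul_arc, h3, h2]

theorem P3_smul_compl_sector : P3 • (sector 5)ᶜ = sector 4 := by
  have h0 : P3 • cusp 0 = -cusp 4 := by decide
  have h5 : P3 • cusp 5 = cusp 5 := by decide
  simp only [sector, Fin.reduceAdd]
  rw [compl_arc (by decide), smul_arc, h0, h5, arc_neg_left]

theorem injective_lift_P1_P2_P3 : Injective (FreeGroup.lift ![P1, P2, P3]) := by
  refine FreeGroup.injective_lift_of_smul_compl_eq _ (sector ∘ ![1, 3, 4]) (sector ∘ ![0, 2, 5])
    (fun i => ⟨_, mem_arc_left (cusp_ne_zero _) _⟩)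
    (pairwise_disjoint_sector.comp_of_injective (by decide))
    (pairwise_disjoint_sector.comp_of_injective (by decide))
    (fun i j => pairwise_disjoint_sector (by fin_cases i <;> fin_cases j <;> decide))
    (fun i => ?_)
  fin_cases i
  exacts [P1_smul_compl_sector, P2_smul_compl_sector, P3_smul_compl_sector]

/-- The subgroup `Γ_{C₃}` of `SL(2, ℤ)` is freely generated by the three parabolic
elements `[[1,2],[-2,-3]]`, `[[1,0],[4,1]]`, `[[-1,2],[-2,3]]`: the homomorphism from
the free group on three generators sending the generators to these matrices is
injective. -/
theorem gammaC3_free_on_parabolics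
    (φ : FreeGroup (Fin 3) →* Matrix.SpecialLinearGroup (Fin 2) ℤ)
    (hφ0 : φ (FreeGroup.of 0) = P1) (hφ1 : φ (FreeGroup.of 1) = P2)
    (hφ2 : φ (FreeGroup.of 2) = P3) :
    Function.Injective φ := by
  have hφ : φ = FreeGroup.lift ![P1, P2, P3] :=
    FreeGroup.ext_hom _ _ fun i => by fin_cases i <;> simp [hφ0, hφ1, hφ2]
  exact hφ ▸ injective_lift_P1_P2_P3
end

section
/- Let G be a finite group and S ⊆ G a finite symmetric generating set (S = S⁻¹). Let G₁,…,G_k be subgroups of G such that every g ∈ G can be written g = g₁g₂⋯g_k with gᵢ ∈ Gᵢ, and suppose each S ∩ Gᵢ is nonempty. Suppose ε₁,…,ε_k ≥ 0 are such that for each i and every function fᵢ : Gᵢ → ℝ with Σ_{x∈Gᵢ} fᵢ(x) = 0 one has ⟨(I - M_{S∩Gᵢ})fᵢ, fᵢ⟩ ≥ εᵢ·⟨fᵢ, fᵢ⟩. Then for every f : G → ℝ with Σ_{x∈G} f(x) = 0, one has ⟨(I - M_S)f, f⟩ ≥ min_{1≤i≤k} (|S ∩ Gᵢ|/|S| ·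 εᵢ/(2k²)) · ⟨f, f⟩. Equivalently, 1 - λ₁'(G,S) ≥ min_i { (|S∩Gᵢ|/|S|) · (1 - λ₁'(Gᵢ, S∩Gᵢ))/(2k²) }. -/
/-!
Let `P_i f` average `f` over the right cosets of `G_i` and `V_i = ‖f - P_i f‖²`. The displacement
`g ↦ ‖λ_g f - f‖` is subadditive and at most `2 √V_i` on `G_i`, so the factorisation
`G = G_1 ⋯ G_k` and Cauchy–Schwarz give `‖λ_g f - f‖² ≤ 4k ∑ V_i`; averaging over `g` for
mean-zero `f` yields `‖f‖² ≤ 2k ∑ V_i ≤ 2k² max_i V_i`. Applying the spectral gap of `S ∩ G_i`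
to `f - P_i f` on each coset and summing gives `ε_i V_i ≤ ⟨(I - M_{S ∩ G_i}) f, f⟩`, and
`|T| ⟨(I - M_T) f, f⟩ = ½ ∑_{t ∈ T} ‖λ_t f - f‖²` is monotone in `T`.
-/

open Finset

lemma sqrt_sum_sq_add_le {ι : Type*} [Fintype ι] (u v : ι → ℝ) :
    √(∑ i, (u i + v i) ^ 2) ≤ √(∑ i, u i ^ 2) + √(∑ i, v i ^ 2) := by
  simpa [EuclideanSpace.norm_eq] using
    norm_add_le (WithLp.toLp 2 u : EuclideanSpace ℝ ι) (WithLp.toLp 2 v)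

noncomputable section

variable {G : Type*} [Group G]

/-- `P_H f`: the mean of `f` over the right coset `H x`. -/
def subgroupAverage (H : Subgroup G) [Fintype H] (f : G → ℝ) (x : G) : ℝ :=
  (Fintype.card H : ℝ)⁻¹ * ∑ h : H, f (h * x)

lemma card_mul_subgroupAverage (H : Subgroup G) [Fintype H] (f : G → ℝ) (x : G) :
    Fintype.card H * subgroupAverage H f x = ∑ h : H, f (h * x) := by
  rw [subgroupAverage, ← mul_assoc, mul_inv_cancel₀ (by exact_mod_cast Fintype.card_ne_zero),
    one_mul]

lemma subgroupAverage_mul_left {H : Subgroup G} [Fintype H] (f : G → ℝ) {t : G} (ht : t ∈ H)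
    (x : G) : subgroupAverage H f (t * x) = subgroupAverage H f x := by
  have hshift : ∑ h : H, f (h * (t * x)) = ∑ h : H, f (h * x) := by
    simp_rw [← mul_assoc]
    exact Equiv.sum_comp (Equiv.mulRight (⟨t, ht⟩ : H)) fun h : H => f (h * x)
  rw [subgroupAverage, hshift, subgroupAverage]

variable [Fintype G]

/-- `⟨(I - M_T) f, f⟩`. -/
def dirichletForm (T : Finset G) (f : G → ℝ) : ℝ :=
  ∑ x, (f x - (#T : ℝ)⁻¹ * ∑ t ∈ T, f (t * x)) * f x

/-- `‖λ_g f - f‖`, where `(λ_g f) x = f (g * x)`. -/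
def displacement (f : G → ℝ) (g : G) : ℝ :=
  √(∑ x, (f (g * x) - f x) ^ 2)

lemma displacement_nonneg (f : G → ℝ) (g : G) : 0 ≤ displacement f g :=
  Real.sqrt_nonneg _

lemma displacement_sq (f : G → ℝ) (g : G) :
    displacement f g ^ 2 = ∑ x, (f (g * x) - f x) ^ 2 :=
  Real.sq_sqrt (sum_nonneg fun _ _ => sq_nonneg _)

lemma displacement_one (f : G → ℝ) : displacement f 1 = 0 := by
  simp [displacement]

lemma displacement_mul_le (f : G → ℝ) (a b : G) :
    displacement f (a * b) ≤ displacement f a + displacement f b := by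
  have hsplit : ∀ x, f (a * b * x) - f x = (f (a * (b * x)) - f (b * x)) + (f (b * x) - f x) :=
    fun x => by rw [mul_assoc]; ring
  have hshift : ∑ x, (f (a * (b * x)) - f (b * x)) ^ 2 = ∑ x, (f (a * x) - f x) ^ 2 :=
    Equiv.sum_comp (Equiv.mulLeft b) fun x => (f (a * x) - f x) ^ 2
  unfold displacement
  simp_rw [hsplit]
  rw [← hshift]
  exact sqrt_sum_sq_add_le _ _

lemma displacement_list_prod_le (f : G → ℝ) (l : List G) :
    displacement f l.prod ≤ (l.map (displacement f)).sum := by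
  induction l with
  | nil => simp [displacement_one]
  | cons a l ih =>
    rw [List.prod_cons, List.map_cons, List.sum_cons]
    exact (displacement_mul_le f a l.prod).trans (by gcongr)

lemma displacement_sq_eq_sub (f : G → ℝ) (t : G) :
    displacement f t ^ 2 = 2 * ∑ x, f x * f x - 2 * ∑ x, f (t * x) * f x := by
  have hshift : ∑ x, f (t * x) * f (t * x) = ∑ x, f x * f x :=
    Equiv.sum_comp (Equiv.mulLeft t) fun x => f x * f x
  calc displacement f t ^ 2
      = ∑ x, f (t * x) * f (t * x) + ∑ x, f x * f x - 2 * ∑ x, f (t * x) * f x := by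
        rw [displacement_sq, mul_sum, ← sum_add_distrib, ← sum_sub_distrib]
        exact sum_congr rfl fun x _ => by ring
    _ = 2 * ∑ x, f x * f x - 2 * ∑ x, f (t * x) * f x := by rw [hshift]; ring

lemma card_mul_dirichletForm (T : Finset G) (f : G → ℝ) :
    #T * dirichletForm T f = 2⁻¹ * ∑ t ∈ T, displacement f t ^ 2 := by
  rcases T.eq_empty_or_nonempty with rfl | hT
  · simp
  have hcard : (#T : ℝ) ≠ 0 := by exact_mod_cast hT.card_pos.ne'
  have hform : dirichletForm T f =
      ∑ x, f x * f x - (#T : ℝ)⁻¹ * ∑ t ∈ T, ∑ x, f (t * x) * f x := by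
    simp only [dirichletForm, sub_mul, sum_sub_distrib, mul_assoc, sum_mul, ← mul_sum]
    rw [sum_comm]
  simp only [hform, displacement_sq_eq_sub, sum_sub_distrib, sum_const, ← mul_sum, nsmul_eq_mul]
  field_simp

lemma card_mul_dirichletForm_le_of_subset {S T : Finset G} (h : T ⊆ S) (f : G → ℝ) :
    #T * dirichletForm T f ≤ #S * dirichletForm S f := by
  rw [card_mul_dirichletForm, card_mul_dirichletForm]
  gcongr

lemma dirichletForm_univ_of_sum_eq_zero {f : G → ℝ} (hf : ∑ x, f x = 0) :
    dirichletForm univ f = ∑ x, f x * f x := by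
  have hshift : ∀ x, ∑ t, f (t * x) = 0 := fun x => (Equiv.sum_comp (Equiv.mulRight x) f).trans hf
  simp [dirichletForm, hshift]

lemma displacement_sq_le_of_mem {H : Subgroup G} [Fintype H] (f : G → ℝ) {g : G} (hg : g ∈ H) :
    displacement f g ^ 2 ≤ 4 * ∑ x, (f x - subgroupAverage H f x) ^ 2 := by
  set P := subgroupAverage H f
  have hshift : ∑ x, (f (g * x) - P (g * x)) ^ 2 = ∑ x, (f x - P x) ^ 2 :=
    Equiv.sum_comp (Equiv.mulLeft g) fun x => (f x - P x) ^ 2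
  calc displacement f g ^ 2
      ≤ ∑ x, (2 * (f (g * x) - P (g * x)) ^ 2 + 2 * (f x - P x) ^ 2) := by
        rw [displacement_sq]
        refine sum_le_sum fun x _ => ?_
        rw [show P (g * x) = P x from subgroupAverage_mul_left f hg x]
        nlinarith [sq_nonneg (f (g * x) + f x - 2 * P x)]
    _ = 4 * ∑ x, (f x - P x) ^ 2 := by
        rw [sum_add_distrib, ← mul_sum, ← mul_sum, hshift]; ring

lemma sum_ite_mem_subgroup (H : Subgroup G) [DecidablePred (· ∈ H)] (u : G → ℝ) :
    ∑ x, (if x ∈ H then u x else 0) = ∑ h : H, u h := by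
  rw [← sum_filter]
  exact sum_subtype _ (by simp) u

lemma displacement_sq_ite_mem {H : Subgroup G} [DecidablePred (· ∈ H)] (u : G → ℝ) {t : G}
    (ht : t ∈ H) :
    displacement (fun x => if x ∈ H then u x else 0) t ^ 2 = ∑ h : H, (u (t * h) - u h) ^ 2 := by
  rw [displacement_sq, ← sum_ite_mem_subgroup H fun x => (u (t * x) - u x) ^ 2]
  refine sum_congr rfl fun x _ => ?_
  by_cases hx : x ∈ H <;> simp [hx, H.mul_mem_cancel_left ht]

/-- `f - P_H f` on the right coset `H c`, pulled back to `H` along `y ↦ y * c`. -/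
def cosetDeviation (H : Subgroup G) [DecidablePred (· ∈ H)] (f : G → ℝ) (c : G) (y : G) : ℝ :=
  if y ∈ H then f (y * c) - subgroupAverage H f c else 0

section cosetDeviation

variable {H : Subgroup G} [DecidablePred (· ∈ H)]

lemma sum_cosetDeviation (f : G → ℝ) (c : G) : ∑ y, cosetDeviation H f c y = 0 := by
  unfold cosetDeviation
  rw [sum_ite_mem_subgroup, sum_sub_distrib, sum_const, card_univ,
    nsmul_eq_mul, ← card_mul_subgroupAverage, sub_self]

lemma sum_sum_cosetDeviation_mul_self (f : G → ℝ) :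
    ∑ c, ∑ y, cosetDeviation H f c y * cosetDeviation H f c y =
      Fintype.card H * ∑ x, (f x - subgroupAverage H f x) ^ 2 := by
  set P := subgroupAverage H f
  have hsq : ∀ c y, cosetDeviation H f c y * cosetDeviation H f c y =
      if y ∈ H then (f (y * c) - P c) ^ 2 else 0 := by
    intro c y; simp only [cosetDeviation]; split_ifs <;> ring
  simp only [hsq, sum_ite_mem_subgroup]
  rw [sum_comm, ← nsmul_eq_mul, ← card_univ, ← sum_const]
  refine sum_congr rfl fun h _ => ?_
  rw [← Equiv.sum_comp (Equiv.mulLeft (h : G)) fun x => (f x - P x) ^ 2]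
  simp only [Equiv.coe_mulLeft, P, subgroupAverage_mul_left f h.2]

lemma sum_dirichletForm_cosetDeviation {T : Finset G} (hT : T.Nonempty) (hTH : ∀ t ∈ T, t ∈ H)
    (f : G → ℝ) :
    ∑ c, dirichletForm T (cosetDeviation H f c) = Fintype.card H * dirichletForm T f := by
  have hdisp : ∀ t ∈ T, ∑ c, displacement (cosetDeviation H f c) t ^ 2 =
      Fintype.card H * displacement f t ^ 2 := by
    intro t ht
    have hc : ∀ c, displacement (cosetDeviation H f c) t ^ 2 =
        ∑ h : H, (f (t * h * c) - f (h * c)) ^ 2 :=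
      fun c => (displacement_sq_ite_mem (fun y => f (y * c) - subgroupAverage H f c)
        (hTH t ht)).trans (by simp only [sub_sub_sub_cancel_right])
    rw [sum_congr rfl fun c _ => hc c, sum_comm, ← nsmul_eq_mul, ← card_univ, ← sum_const,
      displacement_sq]
    refine sum_congr rfl fun h _ => ?_
    simp only [mul_assoc]
    exact Equiv.sum_comp (Equiv.mulLeft (h : G)) fun x => (f (t * x) - f x) ^ 2
  have hcardT : (#T : ℝ) ≠ 0 := by exact_mod_cast hT.card_pos.ne'
  rw [← mul_right_inj' hcardT]
  calc #T * ∑ c, dirichletForm T (cosetDeviation H f c)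
      = 2⁻¹ * ∑ t ∈ T, ∑ c, displacement (cosetDeviation H f c) t ^ 2 := by
        simp only [mul_sum, card_mul_dirichletForm]
        rw [sum_comm]
    _ = #T * (Fintype.card H * dirichletForm T f) := by
        rw [sum_congr rfl hdisp, mul_left_comm, card_mul_dirichletForm, ← mul_sum]; ring

lemma le_dirichletForm_of_spectralGap {T : Finset G} (hT : T.Nonempty) (hTH : ∀ t ∈ T, t ∈ H)
    {ε : ℝ} (hgap : ∀ F : G → ℝ, (∀ x, x ∉ H → F x = 0) → ∑ x, F x = 0 →
      ε * ∑ x, F x * F x ≤ dirichletForm T F) (f : G → ℝ) :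
    ε * ∑ x, (f x - subgroupAverage H f x) ^ 2 ≤ dirichletForm T f := by
  have hcardH : (0 : ℝ) < Fintype.card H := by exact_mod_cast Fintype.card_pos
  refine le_of_mul_le_mul_left ?_ hcardH
  calc Fintype.card H * (ε * ∑ x, (f x - subgroupAverage H f x) ^ 2)
      = ε * ∑ c, ∑ y, cosetDeviation H f c y * cosetDeviation H f c y := by
        rw [sum_sum_cosetDeviation_mul_self]; ring
    _ ≤ ∑ c, dirichletForm T (cosetDeviation H f c) := by
        rw [mul_sum]
        exact sum_le_sum fun c _ =>
          hgap _ (fun x hx => if_neg hx) (sum_cosetDeviation f c)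
    _ = Fintype.card H * dirichletForm T f := sum_dirichletForm_cosetDeviation hT hTH f

end cosetDeviation

lemma sum_mul_self_le_of_forall_eq_prod {k : ℕ} (Gs : Fin k → Subgroup G) [∀ i, Fintype (Gs i)]
    (hfact : ∀ g : G, ∃ gs : Fin k → G, (∀ i, gs i ∈ Gs i) ∧ g = (List.ofFn gs).prod)
    {f : G → ℝ} (hf : ∑ x, f x = 0) :
    ∑ x, f x * f x ≤ 2 * k * ∑ i, ∑ x, (f x - subgroupAverage (Gs i) f x) ^ 2 := by
  set V := fun i => ∑ x, (f x - subgroupAverage (Gs i) f x) ^ 2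
  have hdisp : ∀ g, displacement f g ^ 2 ≤ 4 * k * ∑ i, V i := by
    intro g
    obtain ⟨gs, hgs, rfl⟩ := hfact g
    have htri : displacement f (List.ofFn gs).prod ≤ ∑ i, displacement f (gs i) := by
      simpa [List.map_ofFn, List.sum_ofFn] using displacement_list_prod_le f (List.ofFn gs)
    calc displacement f (List.ofFn gs).prod ^ 2
        ≤ (∑ i, displacement f (gs i)) ^ 2 := by
          gcongr
          exact displacement_nonneg f _
      _ ≤ k * ∑ i, displacement f (gs i) ^ 2 := by
          simpa using sq_sum_le_card_mul_sum_sq (s := univ) (f := fun i => displacement f (gs i))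
      _ ≤ k * ∑ i, 4 * V i := by
          gcongr with i
          exact displacement_sq_le_of_mem f (hgs i)
      _ = 4 * k * ∑ i, V i := by rw [← mul_sum]; ring
  have hsum := card_mul_dirichletForm (univ : Finset G) f
  rw [dirichletForm_univ_of_sum_eq_zero hf, card_univ] at hsum
  have hbound : ∑ g, displacement f g ^ 2 ≤ Fintype.card G * (4 * k * ∑ i, V i) := by
    simpa using sum_le_sum fun g (_ : g ∈ univ) => hdisp g
  have hcard : (0 : ℝ) < Fintype.card G := by exact_mod_cast Fintype.card_pos
  refine le_of_mul_le_mul_left ?_ hcard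
  linarith

end

theorem varju_lemma_general {G : Type*} [Group G] [Fintype G]
    (S : Finset G)
    (k : ℕ) (hk : 0 < k) (Gs : Fin k → Subgroup G)
    [inst : ∀ i, DecidablePred (· ∈ Gs i)]
    (hfact : ∀ g : G, ∃ gs : Fin k → G, (∀ i, gs i ∈ Gs i) ∧ g = (List.ofFn gs).prod)
    (hSGne : ∀ i, (S.filter (· ∈ Gs i)).Nonempty)
    (ε : Fin k → ℝ) (hε : ∀ i, 0 ≤ ε i)
    (hgap : ∀ i, ∀ f : G → ℝ, (∀ x, x ∉ Gs i → f x = 0) → (∑ x, f x) = 0 →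
      ε i * (∑ x, f x * f x) ≤
        ∑ x, (f x - ((S.filter (· ∈ Gs i)).card : ℝ)⁻¹ *
          ∑ t ∈ S.filter (· ∈ Gs i), f (t * x)) * f x)
    (f : G → ℝ) (hf : (∑ x, f x) = 0) :
    (⨅ i : Fin k, ((S.filter (· ∈ Gs i)).card : ℝ) / (S.card : ℝ) *
        (ε i / (2 * (k : ℝ) ^ 2))) * (∑ x, f x * f x) ≤
      ∑ x, (f x - (S.card : ℝ)⁻¹ * ∑ t ∈ S, f (t * x)) * f x := by
  set V := fun i => ∑ x, (f x - subgroupAverage (Gs i) f x) ^ 2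
  obtain ⟨j, -, hj⟩ := (univ : Finset (Fin k)).exists_max_image V ⟨⟨0, hk⟩, mem_univ _⟩
  have hpoincare : ∑ x, f x * f x ≤ 2 * k ^ 2 * V j := by
    calc ∑ x, f x * f x ≤ 2 * k * ∑ i, V i := sum_mul_self_le_of_forall_eq_prod Gs hfact hf
      _ ≤ 2 * k * (k * V j) := by
          gcongr
          simpa using sum_le_card_nsmul univ V (V j) fun i _ => hj i (mem_univ i)
      _ = 2 * k ^ 2 * V j := by ring
  set Sj := S.filter (· ∈ Gs j)
  have hlift : ε j * V j ≤ dirichletForm Sj f :=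
    le_dirichletForm_of_spectralGap (hSGne j) (fun t ht => (mem_filter.mp ht).2) (hgap j) f
  have hmono : #Sj * dirichletForm Sj f ≤ #S * dirichletForm S f :=
    card_mul_dirichletForm_le_of_subset (filter_subset _ S) f
  have hS : (0 : ℝ) < #S := by exact_mod_cast ((hSGne j).mono (filter_subset _ S)).card_pos
  calc (⨅ i, (#(S.filter (· ∈ Gs i)) : ℝ) / #S * (ε i / (2 * k ^ 2))) * ∑ x, f x * f x
      ≤ #Sj / #S * (ε j / (2 * k ^ 2)) * ∑ x, f x * f x := by
        gcongr
        · exact sum_nonneg fun x _ => mul_self_nonneg (f x)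
        · exact ciInf_le (Finite.bddBelow_range _) j
    _ ≤ #Sj / #S * (ε j / (2 * k ^ 2)) * (2 * k ^ 2 * V j) := by
        refine mul_le_mul_of_nonneg_left hpoincare ?_
        have := hε j
        positivity
    _ = #Sj * (ε j * V j) / #S := by field_simp
    _ ≤ #Sj * dirichletForm Sj f / #S := by gcongr
    _ ≤ dirichletForm S f := by rwa [div_le_iff₀' hS]

/-- **Varjú's Lemma.** Let `G` be a finite group, `S` a finite symmetric generating set,
and `G₁, …, G_k` subgroups such that every `g ∈ G` factors as `g = g₁⋯g_k` with
`gᵢ ∈ Gᵢ`, each `S ∩ Gᵢ` nonempty. If for each `i` every mean-zero function supported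
on `Gᵢ` satisfies the spectral gap `⟨(I - M_{S∩Gᵢ})f, f⟩ ≥ εᵢ ⟨f, f⟩`, then every
mean-zero `f : G → ℝ` satisfies
`⟨(I - M_S)f, f⟩ ≥ min_i (|S∩Gᵢ|/|S| · εᵢ/(2k²)) ⟨f, f⟩`. -/
theorem varju_lemma {G : Type*} [Group G] [Fintype G] [DecidableEq G]
    (S : Finset G) (hSne : S.Nonempty) (hSsym : ∀ s ∈ S, s⁻¹ ∈ S)
    (hSgen : Subgroup.closure (S : Set G) = ⊤)
    (k : ℕ) (hk : 0 < k) (Gs : Fin k → Subgroup G)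
    [inst : ∀ i, DecidablePred (· ∈ Gs i)]
    (hfact : ∀ g : G, ∃ gs : Fin k → G, (∀ i, gs i ∈ Gs i) ∧ g = (List.ofFn gs).prod)
    (hSGne : ∀ i, (S.filter (· ∈ Gs i)).Nonempty)
    (ε : Fin k → ℝ) (hε : ∀ i, 0 ≤ ε i)
    (hgap : ∀ i, ∀ f : G → ℝ, (∀ x, x ∉ Gs i → f x = 0) → (∑ x, f x) = 0 →
      ε i * (∑ x, f x * f x) ≤
        ∑ x, (f x - ((S.filter (· ∈ Gs i)).card : ℝ)⁻¹ *
          ∑ t ∈ S.filter (· ∈ Gs i), f (t * x)) * f x)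
    (f : G → ℝ) (hf : (∑ x, f x) = 0) :
    (⨅ i : Fin k, ((S.filter (· ∈ Gs i)).card : ℝ) / (S.card : ℝ) *
        (ε i / (2 * (k : ℝ) ^ 2))) * (∑ x, f x * f x) ≤
      ∑ x, (f x - (S.card : ℝ)⁻¹ * ∑ t ∈ S, f (t * x)) * f x :=
  varju_lemma_general S k hk Gs (inst := inst) hfact hSGne ε hε hgap f hf
end

section
/- There is an absolute constant C₀ > 0 with the following property. Let A, B, C, b be integers with b ≠ 0, gcd(A, 2B, C) = 1, and B² - AC = -2b² (so the binary quadratic form f(x,y) = Ax² + 2Bxy + Cy² is primitive of discriminant -8b²). Then for every positive integer d dividing 2b² and every integer W ≥ 1, the number of pairs (m,n) with 1 ≤ m ≤ W, 1 ≤ n ≤ W, and Am² - 2Bmn + Cn² ≡ 0 (mod d) is at most C₀·(W²·d^{-1/2} + W). -/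
/-!
If `d ∣ f(m, -n)`, the identities `A f(m, -n) = (Am - Bn)² + 2b²n²` and
`C f(m, -n) = (Bm - Cn)² + 2b²m²` show that `d` divides `(Am - Bn)²` and `(Bm - Cn)²`. Writing
`d = s²a` with `a` squarefree and `e = sa`, we get `e ∣ Am - Bn` and `e ∣ Bm - Cn`, while `d ≤ e²`.
So every solution lies in the lattice `Λ = {(m, n) : e ∣ Am - Bn, e ∣ Bm - Cn}`.
Let `jℤ` be the projection of `Λ` to the first coordinate and `Λ ∩ (0 × ℤ) = 0 × kℤ`.
Primitivity of the form gives `e ∣ jk`. In the box `[1, W]²` there are at most `W / j`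
first coordinates, and over each of them at most `W / k + 1` points of `Λ`, so the count is
at most `W² / (jk) + W ≤ W² / √d + W`.
-/

open Finset

theorem Nat.exists_dvd_of_dvd_sq {d : ℕ} (hd : 0 < d) :
    ∃ e : ℕ, 0 < e ∧ d ∣ e ^ 2 ∧ ∀ x : ℤ, (d : ℤ) ∣ x ^ 2 → (e : ℤ) ∣ x := by
  obtain ⟨a, s, ha, hs, rfl, hsqf⟩ := Nat.sq_mul_squarefree_of_pos hd
  refine ⟨s * a, by positivity, ⟨a, by ring⟩, fun x hx => Int.natCast_dvd.mpr ?_⟩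
  replace hx : s ^ 2 * a ∣ x.natAbs ^ 2 := by rwa [← Int.natAbs_pow, ← Int.natCast_dvd]
  obtain ⟨c, hc⟩ := (Nat.pow_dvd_pow_iff two_ne_zero).mp (dvd_of_mul_right_dvd hx)
  rw [hc] at hx ⊢
  rw [mul_pow] at hx
  have hac : a ∣ c := (hsqf.dvd_pow_iff_dvd two_ne_zero).mp
    ((Nat.mul_dvd_mul_iff_left (by positivity)).mp hx)
  exact mul_dvd_mul_left s hac

theorem AddSubgroup.exists_eq_zmultiples_natCast (H : AddSubgroup ℤ) :
    ∃ n : ℕ, H = AddSubgroup.zmultiples (n : ℤ) := by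
  obtain ⟨a, rfl⟩ := Int.subgroup_cyclic H
  exact ⟨a.natAbs, by rw [Int.zmultiples_natAbs, AddSubgroup.zmultiples_eq_closure]⟩

theorem card_le_of_forall_dvd_sub {s : Finset ℤ} {a : ℤ} {L k : ℕ} (hk : 0 < k)
    (hs : ∀ x ∈ s, a ≤ x ∧ x ≤ a + L) (hdvd : ∀ x ∈ s, ∀ y ∈ s, (k : ℤ) ∣ x - y) :
    #s ≤ L / k + 1 := by
  have hmaps : ∀ x ∈ s, ((x - a) / k).toNat ∈ range (L / k + 1) := by
    intro x hx
    have := Int.ediv_le_ediv (Int.natCast_pos.mpr hk) (show x - a ≤ L by linarith [hs x hx])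
    rw [mem_range, Nat.lt_succ_iff, ← Int.ofNat_le, Int.toNat_of_nonneg
      (Int.ediv_nonneg (by linarith [hs x hx]) (Int.natCast_nonneg k))]
    exact_mod_cast this
  have hinj : Set.InjOn (fun x => ((x - a) / k).toNat) s := by
    intro x hx y hy hxy
    have hq : (x - a) / k = (y - a) / k := by
      have := Int.ediv_nonneg (sub_nonneg.mpr (hs x hx).1) (Int.natCast_nonneg k)
      have := Int.ediv_nonneg (sub_nonneg.mpr (hs y hy).1) (Int.natCast_nonneg k)
      simp only at hxy
      omega
    have hr : (x - a) % k = (y - a) % k :=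
      Int.ModEq.sub_right a (Int.modEq_iff_dvd.mpr (hdvd y hy x hx))
    have hx' := Int.ediv_mul_add_emod (x - a) k
    rw [hq, hr] at hx'
    linarith [Int.ediv_mul_add_emod (y - a) k]
  simpa using card_le_card_of_injOn _ hmaps hinj

theorem card_le_of_dvd_fst_of_dvd_sub_snd {T : Finset (ℤ × ℤ)} {W j k : ℕ} (hk : 0 < k)
    (hbox : T ⊆ Icc (1 : ℤ) W ×ˢ Icc (1 : ℤ) W) (hfst : ∀ p ∈ T, (j : ℤ) ∣ p.1)
    (hsnd : ∀ p ∈ T, ∀ q ∈ T, p.1 = q.1 → (k : ℤ) ∣ p.2 - q.2) :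
    #T ≤ ((W - 1) / k + 1) * (W / j) := by
  have hmem : ∀ p ∈ T, (1 ≤ p.1 ∧ p.1 ≤ W) ∧ 1 ≤ p.2 ∧ p.2 ≤ W := fun p hp => by
    simpa only [mem_product, mem_Icc] using hbox hp
  have hfiber : ∀ m ∈ T.image Prod.fst, #{p ∈ T | p.1 = m} ≤ (W - 1) / k + 1 := by
    intro m _
    rw [← card_image_of_injOn (f := Prod.snd) fun p hp q hq h =>
      Prod.ext (((mem_filter.mp hp).2).trans (mem_filter.mp hq).2.symm) h]
    refine card_le_of_forall_dvd_sub hk (a := 1) ?_ ?_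
    · simp only [mem_image, mem_filter]
      rintro _ ⟨p, ⟨hp, -⟩, rfl⟩
      have := hmem p hp
      omega
    · simp only [mem_image, mem_filter]
      rintro _ ⟨p, ⟨hp, hpm⟩, rfl⟩ _ ⟨q, ⟨hq, hqm⟩, rfl⟩
      exact hsnd p hp q hq (hpm.trans hqm.symm)
  have himage : #(T.image Prod.fst) ≤ W / j := by
    rw [← Nat.Ioc_filter_dvd_card_eq_div]
    refine (card_le_card ?_).trans (card_map Nat.castEmbedding).le
    simp only [subset_iff, mem_image, mem_map, mem_filter, mem_Ioc, Nat.castEmbedding_apply]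
    rintro _ ⟨p, hp, rfl⟩
    obtain ⟨⟨h1, h2⟩, -⟩ := hmem p hp
    have hp1 : ((p.1.toNat : ℕ) : ℤ) = p.1 := Int.toNat_of_nonneg (by omega)
    refine ⟨p.1.toNat, ⟨⟨by omega, by omega⟩, ?_⟩, hp1⟩
    exact Int.natCast_dvd_natCast.mp (hp1 ▸ hfst p hp)
  calc #T ≤ ((W - 1) / k + 1) * #(T.image Prod.fst) := card_le_mul_card_image T _ hfiber
    _ ≤ ((W - 1) / k + 1) * (W / j) := Nat.mul_le_mul_left _ himage

theorem natCast_div_add_one_mul_div_le (W j k : ℕ) (hj : 0 < j) :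
    ((((W - 1) / k + 1) * (W / j) : ℕ) : ℝ) ≤ (W : ℝ) ^ 2 / (j * k) + W := by
  have hk' : ((W - 1) / k : ℕ) ≤ (W : ℝ) / k :=
    Nat.cast_div_le.trans (by gcongr; exact_mod_cast Nat.sub_le W 1)
  have hj' : ((W / j : ℕ) : ℝ) ≤ W / j := Nat.cast_div_le
  calc ((((W - 1) / k + 1) * (W / j) : ℕ) : ℝ) ≤ ((W : ℝ) / k + 1) * (W / j) := by
        push_cast; gcongr
    _ = (W : ℝ) ^ 2 / (j * k) + W / j := by ring
    _ ≤ (W : ℝ) ^ 2 / (j * k) + W := by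
        gcongr; exact div_le_self (Nat.cast_nonneg W) (by exact_mod_cast hj)

theorem inv_le_rpow_neg_half {d x : ℝ} (hd : 0 < d) (hx : 0 ≤ x) (hdx : d ≤ x ^ 2) :
    x⁻¹ ≤ d ^ (-(1 : ℝ) / 2) := by
  rw [neg_div, Real.rpow_neg hd.le, ← Real.sqrt_eq_rpow]
  exact inv_anti₀ (Real.sqrt_pos.mpr hd) ((Real.sqrt_le_sqrt hdx).trans_eq (Real.sqrt_sq hx))

/-- The `(m, n)` with `M (m, -n) ≡ 0 (mod e)`, for the Gram matrix `M = !![A, B; B, C]` of `f`. -/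
def formLattice (A B C : ℤ) (e : ℕ) : AddSubgroup (ℤ × ℤ) where
  carrier := {p | (e : ℤ) ∣ A * p.1 - B * p.2 ∧ (e : ℤ) ∣ B * p.1 - C * p.2}
  add_mem' := by
    rintro p q ⟨hp₁, hp₂⟩ ⟨hq₁, hq₂⟩
    constructor
    · simpa only [Prod.fst_add, Prod.snd_add, mul_add, add_sub_add_comm] using dvd_add hp₁ hq₁
    · simpa only [Prod.fst_add, Prod.snd_add, mul_add, add_sub_add_comm] using dvd_add hp₂ hq₂
  zero_mem' := by simp
  neg_mem' := by
    rintro p ⟨hp₁, hp₂⟩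
    constructor
    · rw [Prod.fst_neg, Prod.snd_neg, show A * -p.1 - B * -p.2 = -(A * p.1 - B * p.2) by ring]
      exact hp₁.neg_right
    · rw [Prod.fst_neg, Prod.snd_neg, show B * -p.1 - C * -p.2 = -(B * p.1 - C * p.2) by ring]
      exact hp₂.neg_right

@[simp]
theorem mem_formLattice_iff {A B C : ℤ} {e : ℕ} {p : ℤ × ℤ} :
    p ∈ formLattice A B C e ↔ (e : ℤ) ∣ A * p.1 - B * p.2 ∧ (e : ℤ) ∣ B * p.1 - C * p.2 :=
  Iff.rfl

theorem mem_formLattice_of_dvd {A B C b d : ℤ} {e : ℕ} (hdisc : B ^ 2 - A * C = -2 * b ^ 2)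
    (hd : d ∣ 2 * b ^ 2) (he : ∀ x : ℤ, d ∣ x ^ 2 → (e : ℤ) ∣ x) {m n : ℤ}
    (h : d ∣ A * m ^ 2 - 2 * B * m * n + C * n ^ 2) : (m, n) ∈ formLattice A B C e := by
  constructor
  · refine he _ ?_
    rw [show (A * m - B * n) ^ 2 = A * (A * m ^ 2 - 2 * B * m * n + C * n ^ 2) - 2 * b ^ 2 * n ^ 2
      by linear_combination n ^ 2 * hdisc]
    exact dvd_sub (h.mul_left A) (hd.mul_right _)
  · refine he _ ?_
    rw [show (B * m - C * n) ^ 2 = C * (A * m ^ 2 - 2 * B * m * n + C * n ^ 2) - 2 * b ^ 2 * m ^ 2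
      by linear_combination m ^ 2 * hdisc]
    exact dvd_sub (h.mul_left C) (hd.mul_right _)

theorem dvd_mul_of_mem_formLattice {A B C x y z : ℤ} {e : ℕ}
    (hgcd : Int.gcd A (Int.gcd (2 * B) C) = 1) (hxy : (x, y) ∈ formLattice A B C e)
    (hz : (0, z) ∈ formLattice A B C e) : (e : ℤ) ∣ x * z := by
  obtain ⟨hxy₁, hxy₂⟩ := hxy
  obtain ⟨hz₁, hz₂⟩ := hz
  simp only [mul_zero, zero_sub] at hxy₁ hxy₂ hz₁ hz₂
  have hA : (e : ℤ) ∣ A * (x * z) := by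
    rw [show A * (x * z) = z * (A * x - B * y) - y * -(B * z) by ring]
    exact dvd_sub (hxy₁.mul_left z) (hz₁.mul_left y)
  have hB : (e : ℤ) ∣ 2 * B * (x * z) := by
    rw [show 2 * B * (x * z) = 2 * (z * (B * x - C * y) - y * -(C * z)) by ring]
    exact (dvd_sub (hxy₂.mul_left z) (hz₂.mul_left y)).mul_left 2
  have hC : (e : ℤ) ∣ C * (x * z) := by
    rw [show C * (x * z) = -x * -(C * z) by ring]
    exact hz₂.mul_left (-x)
  have h₂ := Int.gcd_eq_gcd_ab (2 * B) C
  set g := Int.gcd (2 * B) C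
  have h₁ := Int.gcd_eq_gcd_ab A g
  rw [hgcd, Nat.cast_one] at h₁
  rw [show x * z = A.gcdA g * (A * (x * z)) + A.gcdB g * ((2 * B).gcdA C * (2 * B * (x * z)) +
    (2 * B).gcdB C * (C * (x * z))) by linear_combination x * z * h₁ + x * z * A.gcdB g * h₂]
  exact (hA.mul_left _).add (((hB.mul_left _).add (hC.mul_left _)).mul_left _)

theorem exists_formLattice_generators {A B C : ℤ} {e : ℕ} (he : 0 < e)
    (hgcd : Int.gcd A (Int.gcd (2 * B) C) = 1) :
    ∃ j k : ℕ, 0 < j ∧ 0 < k ∧ e ≤ j * k ∧ (∀ p ∈ formLattice A B C e, (j : ℤ) ∣ p.1) ∧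
      ∀ p ∈ formLattice A B C e, ∀ q ∈ formLattice A B C e, p.1 = q.1 → (k : ℤ) ∣ p.2 - q.2 := by
  set G := formLattice A B C e
  obtain ⟨j, hj⟩ := (G.map (AddMonoidHom.fst ℤ ℤ)).exists_eq_zmultiples_natCast
  obtain ⟨k, hk⟩ := (G.comap (AddMonoidHom.inr ℤ ℤ)).exists_eq_zmultiples_natCast
  have hfst (x : ℤ) : (∃ p ∈ G, p.1 = x) ↔ (j : ℤ) ∣ x := by
    rw [← Int.mem_zmultiples_iff, ← hj]; rfl
  have hsnd (y : ℤ) : (0, y) ∈ G ↔ (k : ℤ) ∣ y := by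
    rw [← Int.mem_zmultiples_iff, ← hk]; rfl
  obtain ⟨⟨_, y₀⟩, hjG, rfl⟩ := (hfst j).mpr dvd_rfl
  have hj : 0 < j := by
    have : (j : ℤ) ∣ e := (hfst e).mp ⟨(e, 0), by simp [G], rfl⟩
    exact Nat.pos_of_dvd_of_pos (Int.natCast_dvd_natCast.mp this) he
  have hk : 0 < k := by
    have : (k : ℤ) ∣ e := (hsnd e).mp (by simp [G])
    exact Nat.pos_of_dvd_of_pos (Int.natCast_dvd_natCast.mp this) he
  have hejk : (e : ℤ) ∣ j * k := dvd_mul_of_mem_formLattice hgcd hjG ((hsnd k).mpr dvd_rfl)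
  refine ⟨j, k, hj, hk, Nat.le_of_dvd (by positivity) (by exact_mod_cast hejk),
    fun p hp => (hfst p.1).mp ⟨p, hp, rfl⟩, fun p hp q hq hpq => (hsnd _).mp ?_⟩
  convert G.sub_mem hp hq using 1
  ext <;> simp [hpq]

/-- There is an absolute constant `C₀ > 0` such that for every primitive binary
quadratic form `f(x,y) = Ax² + 2Bxy + Cy²` of discriminant `-8b²` (`b ≠ 0`), every
`d ∣ 2b²` with `d > 0`, and every `W ≥ 1`, the number of pairs `1 ≤ m, n ≤ W` with
`Am² - 2Bmn + Cn² ≡ 0 (mod d)` is at most `C₀ (W² d^{-1/2} + W)`. -/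
theorem count_pairs_quadratic_form_divisible :
    ∃ C₀ : ℝ, 0 < C₀ ∧
      ∀ A B C b : ℤ, b ≠ 0 → Int.gcd A (Int.gcd (2 * B) C) = 1 →
        B ^ 2 - A * C = -2 * b ^ 2 →
        ∀ d : ℤ, 0 < d → d ∣ 2 * b ^ 2 → ∀ W : ℕ, 1 ≤ W →
          ({p : ℤ × ℤ | 1 ≤ p.1 ∧ p.1 ≤ W ∧ 1 ≤ p.2 ∧ p.2 ≤ W ∧
              d ∣ (A * p.1 ^ 2 - 2 * B * p.1 * p.2 + C * p.2 ^ 2)}.ncard : ℝ) ≤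
            C₀ * ((W : ℝ) ^ 2 * (d : ℝ) ^ (-(1 : ℝ) / 2) + (W : ℝ)) := by
  refine ⟨1, one_pos, fun A B C b _ hgcd hdisc d hd hdvd W _ => ?_⟩
  lift d to ℕ using hd.le
  obtain ⟨e, he, hde, hsq⟩ := Nat.exists_dvd_of_dvd_sq (Int.natCast_pos.mp hd)
  obtain ⟨j, k, hj, hk, hejk, hfst, hsnd⟩ := exists_formLattice_generators he hgcd
  classical
  set T := (Icc (1 : ℤ) W ×ˢ Icc (1 : ℤ) W).filter (· ∈ formLattice A B C e)
  have hsub : {p : ℤ × ℤ | 1 ≤ p.1 ∧ p.1 ≤ W ∧ 1 ≤ p.2 ∧ p.2 ≤ W ∧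
      (d : ℤ) ∣ (A * p.1 ^ 2 - 2 * B * p.1 * p.2 + C * p.2 ^ 2)} ⊆ T := by
    rintro p ⟨h₁, h₂, h₃, h₄, hp⟩
    simp only [T, coe_filter, mem_product, mem_Icc]
    exact ⟨⟨⟨h₁, h₂⟩, h₃, h₄⟩, mem_formLattice_of_dvd hdisc hdvd hsq hp⟩
  have hcount : #T ≤ ((W - 1) / k + 1) * (W / j) :=
    card_le_of_dvd_fst_of_dvd_sub_snd hk (filter_subset _ _)
      (fun p hp => hfst p (mem_filter.mp hp).2)
      (fun p hp q hq => hsnd p (mem_filter.mp hp).2 q (mem_filter.mp hq).2)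
  have hd_le : (d : ℝ) ≤ ((j * k : ℕ) : ℝ) ^ 2 := by
    exact_mod_cast (Nat.le_of_dvd (by positivity) hde).trans (Nat.pow_le_pow_left hejk 2)
  calc _ ≤ (#T : ℝ) := by
        exact_mod_cast (Set.ncard_le_ncard hsub T.finite_toSet).trans_eq (Set.ncard_coe_finset T)
    _ ≤ (W : ℝ) ^ 2 / (j * k) + W :=
        (Nat.cast_le.mpr hcount).trans (natCast_div_add_one_mul_div_le W j k hj)
    _ ≤ 1 * ((W : ℝ) ^ 2 * ((d : ℤ) : ℝ) ^ (-(1 : ℝ) / 2) + W) := by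
        rw [one_mul, div_eq_mul_inv, Int.cast_natCast]
        gcongr
        exact_mod_cast inv_le_rpow_neg_half (by exact_mod_cast hd) (by positivity) hd_le
end
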